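/- arXiv:2010.11024 — 6 statements merged into one kernel-verified Lean document; each statement's English description precedes it below -/
import Mathlib

section
/- Every local minimum of the loss L on the feasible set B is a Wardrop equilibrium. That is, if b* ∈ B and there is a neighborhood U of b* in ℝ^{C×d} with L(b*) ≤ L(b) for all b ∈ U ∩ B, then for all i ∈ {1,…,d} and all k, k' ∈ {1,…,C}, b*_{k,i} > 0 implies Σ_{j=1}^M x_i^j c_k^j(b̃*_k^j) ≤ Σ_{j=1}^M x_i^j c_{k'}^j(b̃*_{k'}^j). (Theorem 1, in reduced coordinates.) -/
/-!
The loss is a potential for the congestion game: its derivative at `b` in a direction `v` is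
`β * ∑ k, ∑ i, v k i * cost b i k`. If `b k i > 0`, moving the mass `b k i` of population `i`
from output `k` to output `k'` stays in the convex set of feasible points, so at a local
minimum the derivative in that direction, `β * b k i * (cost b i k' - cost b i k)`, is
nonnegative.
-/

open Finset

namespace Wardrop

variable {ι κ μ : Type*} [Fintype κ]

def feasible : Set (κ → ι → ℝ) := {b | (∀ k i, 0 ≤ b k i) ∧ ∀ i, ∑ k, b k i = 1}

theorem convex_feasible : Convex ℝ (feasible : Set (κ → ι → ℝ)) := by
  rintro b ⟨hb0, hb1⟩ c ⟨hc0, hc1⟩ s t hs ht hst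
  refine ⟨fun k i => ?_, fun i => ?_⟩
  · simp only [Pi.add_apply, Pi.smul_apply, smul_eq_mul]
    have := hb0 k i
    have := hc0 k i
    positivity
  · simp [sum_add_distrib, ← mul_sum, hb1, hc1, hst]

section Shift

variable [DecidableEq ι] [DecidableEq κ]

def shift (i : ι) (k k' : κ) (l : κ) (i' : ι) : ℝ :=
  if i' = i then (if l = k' then 1 else 0) - (if l = k then 1 else 0) else 0

theorem add_smul_shift_mem_feasible {b : κ → ι → ℝ} (hb : b ∈ feasible) (i : ι) (k k' : κ) :
    b + b k i • shift i k k' ∈ feasible := by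
  obtain ⟨hb0, hb1⟩ := hb
  refine ⟨fun l i' => ?_, fun i' => ?_⟩
  · simp only [shift, Pi.add_apply, Pi.smul_apply, smul_eq_mul]
    have := hb0 l i'
    have := hb0 k i
    split_ifs <;> subst_vars <;> nlinarith
  · simp [shift, sum_add_distrib, hb1, ← mul_sum]

theorem sum_sum_shift_mul [Fintype ι] (f : κ → ι → ℝ) (i : ι) (k k' : κ) :
    ∑ l, ∑ i', shift i k k' l i' * f l i' = f k' i - f k i := by
  simp [shift, sub_mul, ite_mul, sum_sub_distrib]

end Shift

variable [Fintype ι] [Fintype μ]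

def load (x : ι → μ → ℝ) (b : κ → ι → ℝ) (k : κ) (j : μ) : ℝ := ∑ i, x i j * b k i

def loss (x : ι → μ → ℝ) (A : κ → μ → ℝ) (β : ℕ) (b : κ → ι → ℝ) : ℝ :=
  ∑ k, ∑ j, A k j * load x b k j ^ β

def cost (x : ι → μ → ℝ) (A : κ → μ → ℝ) (β : ℕ) (b : κ → ι → ℝ) (i : ι) (k : κ) : ℝ :=
  ∑ j, x i j * (A k j * load x b k j ^ (β - 1))

theorem differentiableAt_loss (x : ι → μ → ℝ) (A : κ → μ → ℝ) (β : ℕ) (b : κ → ι → ℝ) :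
    DifferentiableAt ℝ (loss x A β) b := by
  unfold loss load
  fun_prop

theorem fderiv_loss_apply (x : ι → μ → ℝ) (A : κ → μ → ℝ) (β : ℕ) (b v : κ → ι → ℝ) :
    fderiv ℝ (loss x A β) b v = β * ∑ k, ∑ i, v k i * cost x A β b i k := by
  have hload : ∀ k j, HasFDerivAt (fun b => load x b k j) _ b := fun k j =>
    HasFDerivAt.fun_sum fun i _ =>
      (hasFDerivAt_pi'.1 (hasFDerivAt_apply (𝕜 := ℝ) k b) i).const_mul (x i j)
  have hloss : HasFDerivAt (loss x A β) _ b :=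
    HasFDerivAt.fun_sum (u := univ) fun k _ => HasFDerivAt.fun_sum (u := univ) fun j _ =>
      ((hload k j).pow β).const_mul (A k j)
  simp only [hloss.fderiv, nsmul_eq_mul, _root_.sum_apply,
    smul_apply, ContinuousLinearMap.comp_apply,
    ContinuousLinearMap.proj_apply, smul_eq_mul, mul_sum, cost]
  refine sum_congr rfl fun k _ => ?_
  rw [sum_comm]
  exact sum_congr rfl fun i _ => sum_congr rfl fun j _ => by ring

theorem cost_le_of_isLocalMinOn [DecidableEq ι] [DecidableEq κ] {x : ι → μ → ℝ}
    {A : κ → μ → ℝ} {β : ℕ} (hβ : 0 < β) {b : κ → ι → ℝ} (hb : b ∈ feasible)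
    (hmin : IsLocalMinOn (loss x A β) feasible b) {i : ι} {k : κ} (hki : 0 < b k i) (k' : κ) :
    cost x A β b i k ≤ cost x A β b i k' := by
  have hseg : segment ℝ b (b + b k i • shift i k k') ⊆ feasible :=
    convex_feasible.segment_subset hb (add_smul_shift_mem_feasible hb i k k')
  have hderiv := hmin.hasFDerivWithinAt_nonneg
    (differentiableAt_loss x A β b).hasFDerivAt.hasFDerivWithinAt
    (mem_posTangentConeAt_of_segment_subset hseg)
  simp only [fderiv_loss_apply, Pi.smul_apply, smul_eq_mul, mul_assoc, ← mul_sum,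
    sum_sum_shift_mul] at hderiv
  have hshift := (mul_nonneg_iff_of_pos_left (by exact_mod_cast hβ)).1 hderiv
  linarith [(mul_nonneg_iff_of_pos_left hki).1 hshift]

end Wardrop

open Wardrop in
theorem stmt_0_general (d C M : ℕ)
    (β : ℕ) (hβ : 2 ≤ β)
    (x : Fin d → Fin M → ℝ)
    (A : Fin C → Fin M → ℝ)
    (bstar : Fin C → Fin d → ℝ)
    (hpos : ∀ k i, 0 ≤ bstar k i) (hsum : ∀ i, ∑ k, bstar k i = 1)
    (hloc : ∃ U ∈ nhds bstar, ∀ b ∈ U,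
      ((∀ k i, 0 ≤ b k i) ∧ (∀ i, ∑ k, b k i = 1)) →
        (∑ k, ∑ j, A k j * (∑ i, x i j * bstar k i) ^ β) ≤
          ∑ k, ∑ j, A k j * (∑ i, x i j * b k i) ^ β) :
    ∀ (i : Fin d) (k k' : Fin C), 0 < bstar k i →
      (∑ j, x i j * (A k j * (∑ i', x i' j * bstar k i') ^ (β - 1))) ≤
        ∑ j, x i j * (A k' j * (∑ i', x i' j * bstar k' i') ^ (β - 1)) := by
  obtain ⟨U, hU, hmin⟩ := hloc
  have hlocal : IsLocalMinOn (loss x A β) feasible bstar :=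
    eventually_nhdsWithin_iff.2 (Filter.mem_of_superset hU hmin)
  intro i k k' hki
  exact cost_le_of_isLocalMinOn (by omega) ⟨hpos, hsum⟩ hlocal hki k'

/-- Theorem 1 (in reduced coordinates): every local minimum of the loss `L` on the
feasible set `B` is a Wardrop equilibrium. -/
theorem stmt_0 (d C M : ℕ) (hd : 0 < d) (hC : 0 < C) (hM : 0 < M)
    (β : ℕ) (hβ : 2 ≤ β)
    (x : Fin d → Fin M → ℝ) (hx : ∀ i j, 0 ≤ x i j)
    (A : Fin C → Fin M → ℝ) (hA : ∀ k j, 0 < A k j)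
    (bstar : Fin C → Fin d → ℝ)
    (hpos : ∀ k i, 0 ≤ bstar k i) (hsum : ∀ i, ∑ k, bstar k i = 1)
    (hloc : ∃ U ∈ nhds bstar, ∀ b ∈ U,
      ((∀ k i, 0 ≤ b k i) ∧ (∀ i, ∑ k, b k i = 1)) →
        (∑ k, ∑ j, A k j * (∑ i, x i j * bstar k i) ^ β) ≤
          ∑ k, ∑ j, A k j * (∑ i, x i j * b k i) ^ β) :
    ∀ (i : Fin d) (k k' : Fin C), 0 < bstar k i →
      (∑ j, x i j * (A k j * (∑ i', x i' j * bstar k i') ^ (β - 1))) ≤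
        ∑ j, x i j * (A k' j * (∑ i', x i' j * bstar k' i') ^ (β - 1)) :=
  stmt_0_general d C M β hβ x A bstar hpos hsum hloc
end

section
/- The price of anarchy of the game is 1: for every Wardrop equilibrium b* ∈ B, L(b*) = min_{b ∈ B} L(b), i.e., the value of the loss at any Wardrop equilibrium equals the social optimum. (Corollary 2, in reduced coordinates.) -/
open Finset

/-- Convexity of `t ^ n` on nonnegative reals: tangent line bound. -/
lemma aux_pow_convex (n : ℕ) (a t : ℝ) (ha : 0 ≤ a) (ht : 0 ≤ t) :
    a ^ n + n * a ^ (n - 1) * (t - a) ≤ t ^ n := by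
  rcases Nat.eq_zero_or_pos n with h | h
  · subst h; simp
  have key : t ^ n - a ^ n = (∑ i ∈ range n, t ^ i * a ^ (n - 1 - i)) * (t - a) :=
    (geom_sum₂_mul t a n).symm
  have key2 : (n : ℝ) * a ^ (n - 1) * (t - a)
      = (∑ _i ∈ range n, a ^ (n - 1)) * (t - a) := by
    rw [Finset.sum_const, Finset.card_range, nsmul_eq_mul]
  have hterm : ∀ i ∈ range n, 0 ≤ (t ^ i * a ^ (n - 1 - i) - a ^ (n - 1)) * (t - a) := by
    intro i hi
    have hi' : i < n := Finset.mem_range.mp hi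
    have hsplit : a ^ (n - 1) = a ^ (n - 1 - i) * a ^ i := by
      rw [← pow_add]
      congr 1
      omega
    have : (t ^ i * a ^ (n - 1 - i) - a ^ (n - 1)) * (t - a)
        = a ^ (n - 1 - i) * ((t ^ i - a ^ i) * (t - a)) := by
      rw [hsplit]; ring
    rw [this]
    refine mul_nonneg (pow_nonneg ha _) ?_
    rcases le_total a t with hle | hle
    · exact mul_nonneg (sub_nonneg.mpr (pow_le_pow_left₀ ha hle i)) (sub_nonneg.mpr hle)
    · nlinarith [pow_le_pow_left₀ ht hle i]
  have hsum : 0 ≤ ∑ i ∈ range n, (t ^ i * a ^ (n - 1 - i) - a ^ (n - 1)) * (t - a) :=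
    Finset.sum_nonneg hterm
  have hfac : ∑ i ∈ range n, (t ^ i * a ^ (n - 1 - i) - a ^ (n - 1)) * (t - a)
      = t ^ n - a ^ n - (n : ℝ) * a ^ (n - 1) * (t - a) := by
    rw [key, key2, ← sub_mul, ← Finset.sum_sub_distrib, Finset.sum_mul]
  linarith [hfac ▸ hsum]

/-- Corollary 2 (in reduced coordinates): the price of anarchy is 1, i.e. the value of
the loss at any Wardrop equilibrium equals the social optimum. -/
theorem stmt_3 (d C M : ℕ) (hd : 0 < d) (hC : 0 < C) (hM : 0 < M)
    (β : ℕ) (hβ : 2 ≤ β)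
    (x : Fin d → Fin M → ℝ) (hx : ∀ i j, 0 ≤ x i j)
    (A : Fin C → Fin M → ℝ) (hA : ∀ k j, 0 < A k j)
    (bstar : Fin C → Fin d → ℝ)
    (hpos : ∀ k i, 0 ≤ bstar k i) (hsum : ∀ i, ∑ k, bstar k i = 1)
    (hWE : ∀ (i : Fin d) (k k' : Fin C), 0 < bstar k i →
      (∑ j, x i j * (A k j * (∑ i', x i' j * bstar k i') ^ (β - 1))) ≤
        ∑ j, x i j * (A k' j * (∑ i', x i' j * bstar k' i') ^ (β - 1))) :
    IsLeast {v : ℝ | ∃ b : Fin C → Fin d → ℝ,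
        (∀ k i, 0 ≤ b k i) ∧ (∀ i, ∑ k, b k i = 1) ∧
          v = ∑ k, ∑ j, A k j * (∑ i, x i j * b k i) ^ β}
      (∑ k, ∑ j, A k j * (∑ i, x i j * bstar k i) ^ β) := by
  constructor
  · exact ⟨bstar, hpos, hsum, rfl⟩
  rintro v ⟨b, hb0, hb1, rfl⟩
  set S : Fin C → Fin M → ℝ := fun k j => ∑ i, x i j * bstar k i with hSdef
  set T : Fin C → Fin M → ℝ := fun k j => ∑ i, x i j * b k i with hTdef
  have hS0 : ∀ k j, 0 ≤ S k j := fun k j =>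
    Finset.sum_nonneg fun i _ => mul_nonneg (hx i j) (hpos k i)
  have hT0 : ∀ k j, 0 ≤ T k j := fun k j =>
    Finset.sum_nonneg fun i _ => mul_nonneg (hx i j) (hb0 k i)
  set g : Fin C → Fin d → ℝ := fun k i => ∑ j, x i j * (A k j * S k j ^ (β - 1)) with hgdef
  -- convexity step
  have hconv : ∑ k, ∑ j, (A k j * S k j ^ β
        + A k j * ((β : ℝ) * S k j ^ (β - 1) * (T k j - S k j)))
      ≤ ∑ k, ∑ j, A k j * T k j ^ β := by
    refine Finset.sum_le_sum fun k _ => Finset.sum_le_sum fun j _ => ?_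
    have h1 := aux_pow_convex β (S k j) (T k j) (hS0 k j) (hT0 k j)
    have h2 := mul_le_mul_of_nonneg_left h1 (hA k j).le
    calc A k j * S k j ^ β + A k j * ((β : ℝ) * S k j ^ (β - 1) * (T k j - S k j))
        = A k j * (S k j ^ β + (β : ℝ) * S k j ^ (β - 1) * (T k j - S k j)) := by ring
      _ ≤ A k j * T k j ^ β := h2
  have hsplit : ∑ k, ∑ j, (A k j * S k j ^ β
        + A k j * ((β : ℝ) * S k j ^ (β - 1) * (T k j - S k j)))
      = (∑ k, ∑ j, A k j * S k j ^ β)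
        + ∑ k, ∑ j, A k j * ((β : ℝ) * S k j ^ (β - 1) * (T k j - S k j)) := by
    rw [← Finset.sum_add_distrib]
    exact Finset.sum_congr rfl fun k _ => Finset.sum_add_distrib
  rw [hsplit] at hconv
  -- it remains to show the first-order term is nonnegative
  have hR : 0 ≤ ∑ k, ∑ j, A k j * ((β : ℝ) * S k j ^ (β - 1) * (T k j - S k j)) := by
    -- rewrite as a triple sum, reorder, and collect
    have e1 : ∀ k j, A k j * ((β : ℝ) * S k j ^ (β - 1) * (T k j - S k j))
        = ∑ i, (β : ℝ) * (x i j * (A k j * S k j ^ (β - 1)) * (b k i - bstar k i)) := by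
      intro k j
      have hTS : T k j - S k j = ∑ i, x i j * (b k i - bstar k i) := by
        simp only [hTdef, hSdef, ← Finset.sum_sub_distrib]
        exact Finset.sum_congr rfl fun i _ => (mul_sub _ _ _).symm
      rw [hTS, Finset.mul_sum, Finset.mul_sum]
      exact Finset.sum_congr rfl fun i _ => by ring
    have e2 : ∑ k, ∑ j, A k j * ((β : ℝ) * S k j ^ (β - 1) * (T k j - S k j))
        = ∑ i, ∑ k, (β : ℝ) * (g k i * (b k i - bstar k i)) := by
      calc ∑ k, ∑ j, A k j * ((β : ℝ) * S k j ^ (β - 1) * (T k j - S k j))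
          = ∑ k, ∑ j, ∑ i, (β : ℝ) * (x i j * (A k j * S k j ^ (β - 1))
              * (b k i - bstar k i)) :=
            Finset.sum_congr rfl fun k _ => Finset.sum_congr rfl fun j _ => e1 k j
        _ = ∑ k, ∑ i, ∑ j, (β : ℝ) * (x i j * (A k j * S k j ^ (β - 1))
              * (b k i - bstar k i)) :=
            Finset.sum_congr rfl fun k _ => Finset.sum_comm
        _ = ∑ i, ∑ k, ∑ j, (β : ℝ) * (x i j * (A k j * S k j ^ (β - 1))
              * (b k i - bstar k i)) := Finset.sum_comm
        _ = ∑ i, ∑ k, (β : ℝ) * (g k i * (b k i - bstar k i)) := by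
            refine Finset.sum_congr rfl fun i _ => Finset.sum_congr rfl fun k _ => ?_
            rw [hgdef, Finset.sum_mul, Finset.mul_sum]
    rw [e2]
    refine Finset.sum_nonneg fun i _ => ?_
    rw [← Finset.mul_sum]
    refine mul_nonneg (Nat.cast_nonneg β) ?_
    -- use the Wardrop equilibrium condition at coordinate i
    have hex : ∃ k0, 0 < bstar k0 i := by
      by_contra h
      push_neg at h
      have hz : ∀ k, bstar k i = 0 := fun k => le_antisymm (h k) (hpos k i)
      have h1 := hsum i
      rw [Finset.sum_eq_zero (fun k _ => hz k)] at h1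
      exact one_ne_zero h1.symm
    obtain ⟨k0, hk0⟩ := hex
    have hWE' : ∀ (i : Fin d) (k k' : Fin C), 0 < bstar k i → g k i ≤ g k' i := hWE
    have hmin : ∀ k, g k0 i ≤ g k i := fun k => hWE' i k0 k hk0
    have hstar : ∑ k, g k i * bstar k i = g k0 i := by
      have : ∀ k ∈ Finset.univ, g k i * bstar k i = g k0 i * bstar k i := by
        intro k _
        rcases (hpos k i).eq_or_lt with h0 | h0
        · rw [← h0, mul_zero, mul_zero]
        · rw [le_antisymm (hWE' i k k0 h0) (hmin k)]
      rw [Finset.sum_congr rfl this, ← Finset.mul_sum, hsum, mul_one]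
    have hb : g k0 i ≤ ∑ k, g k i * b k i := by
      calc g k0 i = ∑ k, g k0 i * b k i := by rw [← Finset.mul_sum, hb1, mul_one]
        _ ≤ ∑ k, g k i * b k i :=
            Finset.sum_le_sum fun k _ => mul_le_mul_of_nonneg_right (hmin k) (hb0 k i)
    have : ∑ k, g k i * bstar k i ≤ ∑ k, g k i * b k i := by rw [hstar]; exact hb
    have hfinal : ∑ k, (g k i * (b k i - bstar k i))
        = ∑ k, g k i * b k i - ∑ k, g k i * bstar k i := by
      rw [← Finset.sum_sub_distrib]
      exact Finset.sum_congr rfl fun k _ => mul_sub _ _ _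
    rw [hfinal]
    linarith
  linarith
end

section
/- All Wardrop equilibria of the game have the same value: if b, b' ∈ B are both Wardrop equilibria, then L(b) = L(b'). (Property P3 instantiated for the congestion game associated to a linear DNN.) -/
open Finset

open Finset

theorem pow_grad_le (n : ℕ) (hn : 1 ≤ n) (a c : ℝ) (ha : 0 ≤ a) (hc : 0 ≤ c) :
    a ^ n + (n : ℝ) * a ^ (n - 1) * (c - a) ≤ c ^ n := by
  have hid : c ^ n - a ^ n = (∑ i ∈ range n, c ^ i * a ^ (n - 1 - i)) * (c - a) :=
    (geom_sum₂_mul c a n).symm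
  have hterm : ∀ i ∈ range n, a ^ i * a ^ (n - 1 - i) = a ^ (n - 1) := by
    intro i hi
    rw [← pow_add]
    congr 1
    simp only [mem_range] at hi
    omega
  have hsum_eq : ∑ i ∈ range n, a ^ i * a ^ (n - 1 - i) = (n : ℝ) * a ^ (n - 1) := by
    rw [Finset.sum_congr rfl hterm]
    simp [mul_comm]
  rcases le_total a c with h | h
  · have hsum : (n : ℝ) * a ^ (n - 1) ≤ ∑ i ∈ range n, c ^ i * a ^ (n - 1 - i) := by
      rw [← hsum_eq]
      exact Finset.sum_le_sum fun i _ =>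
        mul_le_mul_of_nonneg_right (pow_le_pow_left₀ ha h i) (pow_nonneg ha _)
    nlinarith [mul_le_mul_of_nonneg_right hsum (sub_nonneg.2 h)]
  · have hsum : (∑ i ∈ range n, c ^ i * a ^ (n - 1 - i)) ≤ (n : ℝ) * a ^ (n - 1) := by
      rw [← hsum_eq]
      exact Finset.sum_le_sum fun i _ =>
        mul_le_mul_of_nonneg_right (pow_le_pow_left₀ hc h i) (pow_nonneg ha _)
    nlinarith [mul_le_mul_of_nonpos_right hsum (sub_nonpos.2 h)]

theorem wardrop_le (d C M : ℕ) (hC : 0 < C)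
    (β : ℕ) (hβ : 2 ≤ β)
    (x : Fin d → Fin M → ℝ) (hx : ∀ i j, 0 ≤ x i j)
    (A : Fin C → Fin M → ℝ) (hA : ∀ k j, 0 < A k j)
    (b c : Fin C → Fin d → ℝ)
    (hb0 : ∀ k i, 0 ≤ b k i) (hb1 : ∀ i, ∑ k, b k i = 1)
    (hc0 : ∀ k i, 0 ≤ c k i) (hc1 : ∀ i, ∑ k, c k i = 1)
    (hWE : ∀ (i : Fin d) (k k' : Fin C), 0 < b k i →
      (∑ j, x i j * (A k j * (∑ i', x i' j * b k i') ^ (β - 1))) ≤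
        ∑ j, x i j * (A k' j * (∑ i', x i' j * b k' i') ^ (β - 1))) :
    (∑ k, ∑ j, A k j * (∑ i, x i j * b k i) ^ β) ≤
      ∑ k, ∑ j, A k j * (∑ i, x i j * c k i) ^ β := by
  set G : Fin C → Fin d → ℝ :=
    fun k i => ∑ j, x i j * (A k j * (∑ i', x i' j * b k i') ^ (β - 1)) with hG
  set bt : Fin C → Fin M → ℝ := fun k j => ∑ i, x i j * b k i with hbt
  set ct : Fin C → Fin M → ℝ := fun k j => ∑ i, x i j * c k i with hct
  have hbt0 : ∀ k j, 0 ≤ bt k j := fun k j =>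
    Finset.sum_nonneg fun i _ => mul_nonneg (hx i j) (hb0 k i)
  have hct0 : ∀ k j, 0 ≤ ct k j := fun k j =>
    Finset.sum_nonneg fun i _ => mul_nonneg (hx i j) (hc0 k i)
  -- Step A: variational inequality
  have stepA : ∀ i : Fin d, ∑ k, b k i * G k i ≤ ∑ k, c k i * G k i := by
    intro i
    obtain ⟨k₀, -, hk₀⟩ := Finset.exists_min_image Finset.univ (fun k => G k i)
      (Finset.univ_nonempty_iff.2 (Fin.pos_iff_nonempty.mp hC))
    have h1 : ∑ k, b k i * G k i ≤ ∑ k, b k i * G k₀ i := by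
      apply Finset.sum_le_sum
      intro k _
      rcases (hb0 k i).eq_or_lt with h | h
      · simp [← h]
      · exact mul_le_mul_of_nonneg_left (hWE i k k₀ h) (hb0 k i)
    have h2 : ∑ k, b k i * G k₀ i = G k₀ i := by
      rw [← Finset.sum_mul, hb1 i, one_mul]
    have h3 : G k₀ i = ∑ k, c k i * G k₀ i := by
      rw [← Finset.sum_mul, hc1 i, one_mul]
    have h4 : ∑ k, c k i * G k₀ i ≤ ∑ k, c k i * G k i :=
      Finset.sum_le_sum fun k _ =>
        mul_le_mul_of_nonneg_left (hk₀ k (Finset.mem_univ k)) (hc0 k i)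
    linarith
  have stepB : 0 ≤ ∑ i, ∑ k, (c k i - b k i) * G k i := by
    have : ∀ i : Fin d, 0 ≤ ∑ k, (c k i - b k i) * G k i := by
      intro i
      have := stepA i
      have h := sub_nonneg.2 this
      rw [← Finset.sum_sub_distrib] at h
      simpa [sub_mul] using h
    exact Finset.sum_nonneg fun i _ => this i
  -- rearrangement
  have rearr : ∑ i, ∑ k, (c k i - b k i) * G k i
      = ∑ k, ∑ j, A k j * (bt k j ^ (β - 1) * (ct k j - bt k j)) := by
    rw [Finset.sum_comm]
    apply Finset.sum_congr rfl
    intro k _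
    have hsub : ∀ j, ct k j - bt k j = ∑ i, x i j * (c k i - b k i) := by
      intro j
      simp [hbt, hct, ← Finset.sum_sub_distrib, mul_sub]
    calc ∑ i, (c k i - b k i) * G k i
        = ∑ i, ∑ j, A k j * (x i j * (c k i - b k i) * bt k j ^ (β - 1)) := by
          apply Finset.sum_congr rfl
          intro i _
          rw [hG, Finset.mul_sum]
          apply Finset.sum_congr rfl
          intro j _
          ring
      _ = ∑ j, ∑ i, A k j * (x i j * (c k i - b k i) * bt k j ^ (β - 1)) :=
          Finset.sum_comm
      _ = ∑ j, A k j * (bt k j ^ (β - 1) * (ct k j - bt k j)) := by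
          apply Finset.sum_congr rfl
          intro j _
          rw [hsub j, Finset.mul_sum, Finset.mul_sum]
          apply Finset.sum_congr rfl
          intro i _
          ring
  -- Step C: convexity per-term bound
  have stepC : ∀ k j, A k j * bt k j ^ β +
      (β : ℝ) * (A k j * (bt k j ^ (β - 1) * (ct k j - bt k j))) ≤ A k j * ct k j ^ β := by
    intro k j
    have := pow_grad_le β (by omega) (bt k j) (ct k j) (hbt0 k j) (hct0 k j)
    nlinarith [(hA k j).le, this]
  have final : (∑ k, ∑ j, A k j * bt k j ^ β) +
      (β : ℝ) * ∑ k, ∑ j, A k j * (bt k j ^ (β - 1) * (ct k j - bt k j)) ≤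
      ∑ k, ∑ j, A k j * ct k j ^ β := by
    rw [Finset.mul_sum, ← Finset.sum_add_distrib]
    apply Finset.sum_le_sum
    intro k _
    rw [Finset.mul_sum, ← Finset.sum_add_distrib]
    exact Finset.sum_le_sum fun j _ => stepC k j
  have hβ0 : 0 ≤ (β : ℝ) := by positivity
  rw [rearr] at stepB
  nlinarith [mul_nonneg hβ0 stepB]

/-- Property P3 for the congestion game associated to a linear DNN: all Wardrop
equilibria have the same value of the loss. -/
theorem stmt_4 (d C M : ℕ) (hd : 0 < d) (hC : 0 < C) (hM : 0 < M)
    (β : ℕ) (hβ : 2 ≤ β)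
    (x : Fin d → Fin M → ℝ) (hx : ∀ i j, 0 ≤ x i j)
    (A : Fin C → Fin M → ℝ) (hA : ∀ k j, 0 < A k j)
    (b b' : Fin C → Fin d → ℝ)
    (hb : (∀ k i, 0 ≤ b k i) ∧ ∀ i, ∑ k, b k i = 1)
    (hb' : (∀ k i, 0 ≤ b' k i) ∧ ∀ i, ∑ k, b' k i = 1)
    (hWEb : ∀ (i : Fin d) (k k' : Fin C), 0 < b k i →
      (∑ j, x i j * (A k j * (∑ i', x i' j * b k i') ^ (β - 1))) ≤
        ∑ j, x i j * (A k' j * (∑ i', x i' j * b k' i') ^ (β - 1)))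
    (hWEb' : ∀ (i : Fin d) (k k' : Fin C), 0 < b' k i →
      (∑ j, x i j * (A k j * (∑ i', x i' j * b' k i') ^ (β - 1))) ≤
        ∑ j, x i j * (A k' j * (∑ i', x i' j * b' k' i') ^ (β - 1))) :
    (∑ k, ∑ j, A k j * (∑ i, x i j * b k i) ^ β) =
      ∑ k, ∑ j, A k j * (∑ i, x i j * b' k i) ^ β := by
  exact le_antisymm
    (wardrop_le d C M hC β hβ x hx A hA b b' hb.1 hb.2 hb'.1 hb'.2 hWEb)
    (wardrop_le d C M hC β hβ x hx A hA b' b hb'.1 hb'.2 hb.1 hb.2 hWEb')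
end

section
/- Every nonnegative column-stochastic C × d matrix factors through the layers of a pyramidal network: let L ≥ 1 and n_0 = d, n_L = C, with n_ℓ ≥ C for 1 ≤ ℓ ≤ L−1. Then for every matrix w' ∈ ℝ^{C×d} with nonnegative entries and all column sums equal to 1, there exist matrices w^(ℓ) ∈ ℝ^{n_ℓ × n_{ℓ−1}} (ℓ = 1,…,L), each with nonnegative entries and all column sums equal to 1, such that w' = w^(L)⋯w^(1). (Second part of Lemma 2: every action distribution of the congestion game is realized by some weight configuration.) -/
open Finset

/-- The product `w^(L) ⋯ w^(1)` of the weight matrices of an `L`-layer linear network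
with layer widths `n 0, n 1, …, n L`. -/
noncomputable def netMat : (L : ℕ) → (n : ℕ → ℕ) →
    (∀ ℓ : Fin L, Matrix (Fin (n (↑ℓ + 1))) (Fin (n ↑ℓ)) ℝ) →
    Matrix (Fin (n L)) (Fin (n 0)) ℝ
  | 0, _, _ => 1
  | L + 1, n, W =>
      (W ⟨L, Nat.lt_succ_self L⟩ : Matrix (Fin (n (L + 1))) (Fin (n L)) ℝ) *
        netMat L n (fun ℓ : Fin L => (W ℓ.castSucc : Matrix (Fin (n (↑ℓ + 1))) (Fin (n ↑ℓ)) ℝ))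

/-!
Write `E_f` for the 0-1 matrix `(1 : Matrix m m ℝ).submatrix id f` of a map `f : n → m`; its
columns are unit vectors, so it is column-stochastic, and `E_f * E_g = E_(f ∘ g)`. Layer `ℓ` is
`E_g * P`, where `g : Fin C → Fin n_ℓ` is an embedding for a hidden layer (it exists since
`C ≤ n_ℓ`) and `g = id` for the last one; the first layer takes `P = w'`, every later one
`P = E_(invFun f)` for the embedding `f` of the previous layer. As `invFun f ∘ f = id`, the
product of the first `ℓ` layers is `E_g * w'`.
-/

open Function

def Matrix.IsColStochastic {R m n : Type*} [Semiring R] [PartialOrder R] [Fintype m]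
    (A : Matrix m n R) : Prop :=
  (∀ i j, 0 ≤ A i j) ∧ ∀ j, ∑ i, A i j = 1

namespace Matrix

theorem mul_one_submatrix_id {R l m n : Type*} [NonAssocSemiring R] [Fintype n] [DecidableEq n]
    (M : Matrix m n R) (g : l → n) :
    M * (1 : Matrix n n R).submatrix id g = M.submatrix id g := by
  ext i j
  simp [mul_apply, one_apply]

variable {R m n p : Type*} [Semiring R] [PartialOrder R] [IsOrderedRing R]

theorem IsColStochastic.mul [Fintype m] [Fintype n] {A : Matrix m n R} {B : Matrix n p R}
    (hA : A.IsColStochastic) (hB : B.IsColStochastic) : (A * B).IsColStochastic := by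
  refine ⟨fun i j => sum_nonneg fun k _ => mul_nonneg (hA.1 i k) (hB.1 k j), fun j => ?_⟩
  calc ∑ i, (A * B) i j = ∑ k, (∑ i, A i k) * B k j := by
        simp only [mul_apply, sum_mul]; exact sum_comm
    _ = 1 := by simp only [hA.2, one_mul, hB.2]

theorem isColStochastic_one_submatrix [Fintype m] [DecidableEq m] (f : n → m) :
    ((1 : Matrix m m R).submatrix id f).IsColStochastic :=
  ⟨fun i j => by simp only [submatrix_apply, one_apply, id]; split <;> simp,
    fun j => by simp [one_apply]⟩

end Matrix

open Matrix

theorem netMat_lastCases (L : ℕ) (n : ℕ → ℕ)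
    (M : Matrix (Fin (n (L + 1))) (Fin (n L)) ℝ)
    (W : ∀ ℓ : Fin L, Matrix (Fin (n (↑ℓ + 1))) (Fin (n ↑ℓ)) ℝ) :
    netMat (L + 1) n
        (Fin.lastCases (motive := fun ℓ => Matrix (Fin (n (↑ℓ + 1))) (Fin (n ↑ℓ)) ℝ) M W) =
      M * netMat L n W := by
  simp only [netMat]
  congr 1
  · exact Fin.lastCases_last
  · congr 1; funext ℓ; exact Fin.lastCases_castSucc ℓ

theorem exists_isColStochastic_netMat_eq {C : ℕ} (hC : 0 < C) (n : ℕ → ℕ)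
    (L : ℕ) (hn : ∀ ℓ, 1 ≤ ℓ → ℓ ≤ L → C ≤ n ℓ)
    (A : Matrix (Fin C) (Fin (n 0)) ℝ) (hA : A.IsColStochastic)
    (g : Fin C → Fin (n (L + 1))) :
    ∃ W : (∀ ℓ : Fin (L + 1), Matrix (Fin (n (↑ℓ + 1))) (Fin (n ↑ℓ)) ℝ),
      (∀ ℓ, (W ℓ).IsColStochastic) ∧
        netMat (L + 1) n W =
          (1 : Matrix (Fin (n (L + 1))) (Fin (n (L + 1))) ℝ).submatrix id g * A := by
  induction L with
  | zero =>
    refine ⟨Fin.lastCases ((1 : Matrix (Fin (n 1)) (Fin (n 1)) ℝ).submatrix id g * A)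
      fun ℓ => ℓ.elim0, ?_, ?_⟩
    · refine Fin.lastCases ?_ fun ℓ => ℓ.elim0
      simpa only [Fin.lastCases_last] using (isColStochastic_one_submatrix g).mul hA
    · rw [netMat_lastCases, netMat, Matrix.mul_one]
  | succ L ih =>
    have : Nonempty (Fin C) := ⟨⟨0, hC⟩⟩
    set f : Fin C → Fin (n (L + 1)) := Fin.castLE (hn (L + 1) (by omega) le_rfl)
    obtain ⟨W, hW, hWA⟩ := ih (fun ℓ h₁ h₂ => hn ℓ h₁ (by omega)) f
    set P : Matrix (Fin C) (Fin (n (L + 1))) ℝ :=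
      (1 : Matrix (Fin C) (Fin C) ℝ).submatrix id (invFun f)
    have hPf : P * (1 : Matrix (Fin (n (L + 1))) (Fin (n (L + 1))) ℝ).submatrix id f = 1 := by
      rw [mul_one_submatrix_id, submatrix_submatrix, Function.comp_id,
        invFun_comp (Fin.castLE_injective _), submatrix_id_id]
    refine ⟨Fin.lastCases ((1 : Matrix (Fin (n (L + 2))) (Fin (n (L + 2))) ℝ).submatrix id g * P)
      W, ?_, ?_⟩
    · refine Fin.lastCases ?_ fun ℓ => ?_
      · simpa only [Fin.lastCases_last] using
          (isColStochastic_one_submatrix g).mul (isColStochastic_one_submatrix _)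
      · simpa only [Fin.lastCases_castSucc] using hW ℓ
    · rw [netMat_lastCases, hWA, Matrix.mul_assoc, ← Matrix.mul_assoc P, hPf, Matrix.one_mul]

theorem stmt_7_general (L : ℕ) (hL : 1 ≤ L) (n : ℕ → ℕ) (C : ℕ) (hC : 1 ≤ C)
    (hnL : n L = C)
    (hpyr : ∀ ℓ, 1 ≤ ℓ → ℓ < L → C ≤ n ℓ)
    (w' : Matrix (Fin (n L)) (Fin (n 0)) ℝ)
    (hpos : ∀ k i, 0 ≤ w' k i) (hsum : ∀ i, ∑ k, w' k i = 1) :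
    ∃ W : (∀ ℓ : Fin L, Matrix (Fin (n (↑ℓ + 1))) (Fin (n ↑ℓ)) ℝ),
      (∀ ℓ k i, 0 ≤ W ℓ k i) ∧ (∀ ℓ i, ∑ k, W ℓ k i = 1) ∧ netMat L n W = w' := by
  subst hnL
  obtain ⟨L, rfl⟩ := Nat.exists_eq_add_of_le' hL
  obtain ⟨W, hW, hWw⟩ := exists_isColStochastic_netMat_eq hC n L
    (fun ℓ h₁ h₂ => hpyr ℓ h₁ (by omega)) w' ⟨hpos, hsum⟩ id
  refine ⟨W, fun ℓ => (hW ℓ).1, fun ℓ => (hW ℓ).2, ?_⟩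
  rw [hWw, submatrix_id_id, Matrix.one_mul]

/-- Second part of Lemma 2: every nonnegative column-stochastic `C × d` matrix factors
as a product of column-stochastic weight matrices through the layers of a pyramidal
network (all hidden widths at least `C`). -/
theorem stmt_7 (L : ℕ) (hL : 1 ≤ L) (n : ℕ → ℕ) (d C : ℕ) (hd : 1 ≤ d) (hC : 1 ≤ C)
    (hn0 : n 0 = d) (hnL : n L = C)
    (hpyr : ∀ ℓ, 1 ≤ ℓ → ℓ < L → C ≤ n ℓ)
    (w' : Matrix (Fin (n L)) (Fin (n 0)) ℝ)
    (hpos : ∀ k i, 0 ≤ w' k i) (hsum : ∀ i, ∑ k, w' k i = 1) :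
    ∃ W : (∀ ℓ : Fin L, Matrix (Fin (n (↑ℓ + 1))) (Fin (n ↑ℓ)) ℝ),
      (∀ ℓ k i, 0 ≤ W ℓ k i) ∧ (∀ ℓ i, ∑ k, W ℓ k i = 1) ∧ netMat L n W = w' :=
  stmt_7_general L hL n C hC hnL hpyr w' hpos hsum
end

section
/- Corollary 3: let C = 2 and assume Σ_{i=1}^d x_i^j = 1 for every j. Then every local minimum of the squared loss Sloss on B is a global minimum of Sloss on B: if b* ∈ B and there is a neighborhood U of b* in ℝ^{2×d} with Sloss(b*) ≤ Sloss(b) for all b ∈ U ∩ B, then Sloss(b*) ≤ Sloss(b) for all b ∈ B. -/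
open Finset

lemma combo_sq_le (t A B : ℝ) (h0 : 0 ≤ t) (h1 : t ≤ 1) :
    ((1 - t) * A + t * B) ^ 2 ≤ (1 - t) * A ^ 2 + t * B ^ 2 := by
  nlinarith [sq_nonneg (A - B), mul_nonneg h0 (sub_nonneg.mpr h1)]

/-- Corollary 3: with `C = 2` and normalized inputs, every local minimum of the squared
loss `Sloss` on `B` is a global minimum of `Sloss` on `B`. -/
theorem stmt_17 (d M : ℕ) (hd : 0 < d) (hM : 0 < M)
    (x : Fin d → Fin M → ℝ) (hx : ∀ i j, 0 ≤ x i j)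
    (hx1 : ∀ j, ∑ i, x i j = 1)
    (e : Fin M → Fin 2)
    (bstar : Fin 2 → Fin d → ℝ)
    (hpos : ∀ k i, 0 ≤ bstar k i) (hsum : ∀ i, ∑ k, bstar k i = 1)
    (hloc : ∃ U ∈ nhds bstar, ∀ b ∈ U,
      ((∀ k i, 0 ≤ b k i) ∧ (∀ i, ∑ k, b k i = 1)) →
        (∑ j, ((∑ k ∈ Finset.univ.filter (fun k => k ≠ e j),
              (∑ i, x i j * bstar k i) ^ 2)
            + (1 - ∑ i, x i j * bstar (e j) i) ^ 2)) ≤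
          ∑ j, ((∑ k ∈ Finset.univ.filter (fun k => k ≠ e j), (∑ i, x i j * b k i) ^ 2)
            + (1 - ∑ i, x i j * b (e j) i) ^ 2)) :
    ∀ b : Fin 2 → Fin d → ℝ,
      (∀ k i, 0 ≤ b k i) → (∀ i, ∑ k, b k i = 1) →
        (∑ j, ((∑ k ∈ Finset.univ.filter (fun k => k ≠ e j),
              (∑ i, x i j * bstar k i) ^ 2)
            + (1 - ∑ i, x i j * bstar (e j) i) ^ 2)) ≤
          ∑ j, ((∑ k ∈ Finset.univ.filter (fun k => k ≠ e j), (∑ i, x i j * b k i) ^ 2)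
            + (1 - ∑ i, x i j * b (e j) i) ^ 2) := by
  intro b hb hbs
  set F : (Fin 2 → Fin d → ℝ) → ℝ := fun β =>
    ∑ j, ((∑ k ∈ Finset.univ.filter (fun k => k ≠ e j), (∑ i, x i j * β k i) ^ 2)
      + (1 - ∑ i, x i j * β (e j) i) ^ 2) with hF
  show F bstar ≤ F b
  -- convexity inequality
  have key : ∀ t : ℝ, 0 ≤ t → t ≤ 1 → ∀ a c : Fin 2 → Fin d → ℝ,
      F (fun k i => (1 - t) * a k i + t * c k i) ≤ (1 - t) * F a + t * F c := by
    intro t ht0 ht1 a c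
    simp only [hF, Finset.mul_sum, ← Finset.sum_add_distrib]
    apply Finset.sum_le_sum
    intro j _
    have hs : ∀ k, (∑ i, x i j * ((1 - t) * a k i + t * c k i)) =
        (1 - t) * (∑ i, x i j * a k i) + t * (∑ i, x i j * c k i) := by
      intro k
      rw [Finset.mul_sum, Finset.mul_sum, ← Finset.sum_add_distrib]
      exact Finset.sum_congr rfl (fun i _ => by ring)
    have h1 : (∑ k ∈ Finset.univ.filter (fun k => k ≠ e j),
          (∑ i, x i j * ((1 - t) * a k i + t * c k i)) ^ 2) ≤
        (1 - t) * (∑ k ∈ Finset.univ.filter (fun k => k ≠ e j), (∑ i, x i j * a k i) ^ 2)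
        + t * (∑ k ∈ Finset.univ.filter (fun k => k ≠ e j), (∑ i, x i j * c k i) ^ 2) := by
      rw [Finset.mul_sum, Finset.mul_sum, ← Finset.sum_add_distrib]
      apply Finset.sum_le_sum
      intro k _
      rw [hs k]
      exact combo_sq_le t _ _ ht0 ht1
    have h2 : (1 - ∑ i, x i j * ((1 - t) * a (e j) i + t * c (e j) i)) ^ 2 ≤
        (1 - t) * (1 - ∑ i, x i j * a (e j) i) ^ 2
        + t * (1 - ∑ i, x i j * c (e j) i) ^ 2 := by
      rw [hs (e j)]
      have : (1 - ((1 - t) * (∑ i, x i j * a (e j) i) + t * (∑ i, x i j * c (e j) i))) =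
          (1 - t) * (1 - ∑ i, x i j * a (e j) i) + t * (1 - ∑ i, x i j * c (e j) i) := by
        ring
      rw [this]
      exact combo_sq_le t _ _ ht0 ht1
    nlinarith [h1, h2]
  -- find a small t with the interpolated point in U
  obtain ⟨U, hU, hmin⟩ := hloc
  have hcont : Continuous (fun t : ℝ =>
      (fun k i => (1 - t) * bstar k i + t * b k i : Fin 2 → Fin d → ℝ)) := by
    apply continuous_pi; intro k; apply continuous_pi; intro i; fun_prop
  have h0 : (fun k i => (1 - (0:ℝ)) * bstar k i + (0:ℝ) * b k i) = bstar := by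
    funext k i; ring
  have htend : Filter.Tendsto (fun t : ℝ =>
      (fun k i => (1 - t) * bstar k i + t * b k i : Fin 2 → Fin d → ℝ))
      (nhds 0) (nhds bstar) := by
    have := hcont.tendsto 0
    rwa [h0] at this
  have hev : ∀ᶠ t in nhds (0:ℝ),
      (fun k i => (1 - t) * bstar k i + t * b k i : Fin 2 → Fin d → ℝ) ∈ U :=
    htend hU
  have hlt1 : ∀ᶠ t in nhds (0:ℝ), t < 1 := Iio_mem_nhds (by norm_num)
  have hall := (hev.and hlt1).filter_mono (nhdsWithin_le_nhds (s := Set.Ioi (0:ℝ)))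
  obtain ⟨t, ⟨htU, ht1⟩, ht0mem⟩ := (hall.and eventually_mem_nhdsWithin).exists
  have ht0 : (0:ℝ) < t := ht0mem
  have hcpos : ∀ k i, 0 ≤ (1 - t) * bstar k i + t * b k i := fun k i =>
    add_nonneg (mul_nonneg (by linarith) (hpos k i)) (mul_nonneg ht0.le (hb k i))
  have hcsum : ∀ i, (∑ k, ((1 - t) * bstar k i + t * b k i)) = 1 := by
    intro i
    rw [Finset.sum_add_distrib, ← Finset.mul_sum, ← Finset.mul_sum, hsum i, hbs i]
    ring
  have hA : F bstar ≤ F (fun k i => (1 - t) * bstar k i + t * b k i) :=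
    hmin _ htU ⟨hcpos, hcsum⟩
  have hB := key t ht0.le ht1.le bstar b
  have hmul : t * F bstar ≤ t * F b := by linarith
  exact le_of_mul_le_mul_left hmul ht0
end

section
/- Final corollary (ReLU model): let ρ > 0, β = 2, and L_ρ(b) = Σ_{k=1}^C Σ_{j=1}^M A_k^j (ρ·b̃_k^j)². Then every local minimum of L_ρ on B is a Wardrop equilibrium of the congestion game associated to the linear network: if b* ∈ B is a local minimum of L_ρ on B, then for all i ∈ {1,…,d} and all k, k' ∈ {1,…,C}, b*_{k,i} > 0 implies Σ_{j=1}^M x_i^j c_k^j(b̃*_k^j) ≤ Σ_{j=1}^M x_i^j c_{k'}^j(b̃*_{k'}^j). -/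
open Finset

/-- Final corollary (ReLU model): with `β = 2`, every local minimum of the expected
nonlinear loss `L_ρ(b) = Σ_k Σ_j A_k^j (ρ·b̃_k^j)²` on `B` is a Wardrop equilibrium of
the congestion game associated to the linear network (cost `c_k^j(ξ) = A_k^j ξ`). -/
theorem stmt_19 (d C M : ℕ) (hd : 0 < d) (hC : 0 < C) (hM : 0 < M)
    (ρ : ℝ) (hρ : 0 < ρ)
    (x : Fin d → Fin M → ℝ) (hx : ∀ i j, 0 ≤ x i j)
    (A : Fin C → Fin M → ℝ) (hA : ∀ k j, 0 < A k j)
    (bstar : Fin C → Fin d → ℝ)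
    (hpos : ∀ k i, 0 ≤ bstar k i) (hsum : ∀ i, ∑ k, bstar k i = 1)
    (hloc : ∃ U ∈ nhds bstar, ∀ b ∈ U,
      ((∀ k i, 0 ≤ b k i) ∧ (∀ i, ∑ k, b k i = 1)) →
        (∑ k, ∑ j, A k j * (ρ * ∑ i, x i j * bstar k i) ^ 2) ≤
          ∑ k, ∑ j, A k j * (ρ * ∑ i, x i j * b k i) ^ 2) :
    ∀ (i : Fin d) (k k' : Fin C), 0 < bstar k i →
      (∑ j, x i j * (A k j * ∑ i', x i' j * bstar k i')) ≤
        ∑ j, x i j * (A k' j * ∑ i', x i' j * bstar k' i') := by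
  intro i k k' hbk
  by_cases hkk : k = k'
  · subst hkk; exact le_refl _
  obtain ⟨U, hU, hmin⟩ := hloc
  obtain ⟨ε₀, hε₀, hball⟩ := Metric.mem_nhds_iff.mp hU
  set s : Fin C → Fin M → ℝ := fun k'' j => ∑ i', x i' j * bstar k'' i' with hs
  set G : Fin C → ℝ := fun k'' => ∑ j, x i j * (A k'' j * s k'' j) with hG
  set Q : ℝ := ∑ j, (A k j + A k' j) * (x i j) ^ 2 with hQ
  have hQ0 : 0 ≤ Q := by
    apply Finset.sum_nonneg; intro j _
    have := (hA k j).le; have := (hA k' j).le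
    positivity
  have key : ∀ ε : ℝ, 0 < ε → ε < ε₀ → ε ≤ bstar k i →
      0 ≤ 2 * (G k' - G k) + ε * Q := by
    intro ε hε hεε hεb
    set bε : Fin C → Fin d → ℝ := fun k'' i' =>
      bstar k'' i' + (if k'' = k' ∧ i' = i then ε else 0)
        - (if k'' = k ∧ i' = i then ε else 0) with hbε
    have hmem : bε ∈ U := by
      apply hball
      rw [Metric.mem_ball, dist_pi_lt_iff hε₀]
      intro k''
      rw [dist_pi_lt_iff hε₀]
      intro i'
      rw [Real.dist_eq]
      have h1 : bε k'' i' - bstar k'' i' =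
          (if k'' = k' ∧ i' = i then ε else 0) - (if k'' = k ∧ i' = i then ε else 0) := by
        simp [hbε]; ring
      rw [h1]
      have hb : |(if k'' = k' ∧ i' = i then ε else 0) - (if k'' = k ∧ i' = i then ε else 0)| ≤ ε := by
        split_ifs <;> simp [abs_of_nonneg hε.le, hε.le]
      linarith
    have hpos' : ∀ k'' i', 0 ≤ bε k'' i' := by
      intro k'' i'
      by_cases h2 : k'' = k ∧ i' = i
      · have hnot : ¬ (k'' = k' ∧ i' = i) := fun h => (Ne.symm hkk) (h.1.symm.trans h2.1)
        simp only [hbε, if_pos h2, if_neg hnot]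
        obtain ⟨hk2, hi2⟩ := h2; subst hk2; subst hi2
        linarith
      · by_cases h1 : k'' = k' ∧ i' = i
        · simp only [hbε, if_pos h1, if_neg h2]
          have := hpos k'' i'
          linarith
        · simp [hbε, h1, h2, hpos k'' i']
    have hsum' : ∀ i', ∑ k'', bε k'' i' = 1 := by
      intro i'
      simp only [hbε]
      rw [Finset.sum_sub_distrib, Finset.sum_add_distrib]
      by_cases hi : i' = i
      · subst hi
        simp [Finset.sum_ite_eq', hsum i']
      · simp [hi, hsum i']
    have hsb : ∀ k'' j, ∑ i', x i' j * bε k'' i' =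
        s k'' j + (if k'' = k' then ε * x i j else 0) - (if k'' = k then ε * x i j else 0) := by
      intro k'' j
      simp only [hbε, mul_add, mul_sub]
      rw [Finset.sum_sub_distrib, Finset.sum_add_distrib]
      by_cases h1 : k'' = k' <;> by_cases h2 : k'' = k
      · exact absurd (h2.symm.trans h1) hkk
      · simp [h1, h2, Finset.mul_sum, Finset.sum_ite_eq', mul_comm, hs, hkk, Ne.symm hkk]
      · simp [h1, h2, Finset.mul_sum, Finset.sum_ite_eq', mul_comm, hs, hkk, Ne.symm hkk]
      · simp [h1, h2, Finset.mul_sum, Finset.sum_ite_eq', mul_comm, hs, hkk, Ne.symm hkk]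
    have hL := hmin bε hmem ⟨hpos', hsum'⟩
    have hdiff : (∑ k'', ∑ j, A k'' j * (ρ * ∑ i', x i' j * bε k'' i') ^ 2)
        - (∑ k'', ∑ j, A k'' j * (ρ * ∑ i', x i' j * bstar k'' i') ^ 2)
        = ρ ^ 2 * ε * (2 * (G k' - G k) + ε * Q) := by
      rw [← Finset.sum_sub_distrib]
      have hzero : ∀ k'' ∈ (univ : Finset (Fin C)), k'' ∉ ({k, k'} : Finset (Fin C)) →
          ((∑ j, A k'' j * (ρ * ∑ i', x i' j * bε k'' i') ^ 2)
            - ∑ j, A k'' j * (ρ * ∑ i', x i' j * bstar k'' i') ^ 2) = 0 := by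
        intro k'' _ hk''
        simp only [Finset.mem_insert, Finset.mem_singleton, not_or] at hk''
        have : ∀ j, ∑ i', x i' j * bε k'' i' = ∑ i', x i' j * bstar k'' i' := by
          intro j; rw [hsb]; simp [hk''.1, hk''.2, hs]
        simp [this]
      have hss := Finset.sum_subset (Finset.subset_univ ({k, k'} : Finset (Fin C))) hzero
      rw [← hss, Finset.sum_pair hkk]
      have e1 : ∀ j, ∑ i', x i' j * bε k i' = s k j - ε * x i j := by
        intro j; rw [hsb]; simp [hkk]
      have e2 : ∀ j, ∑ i', x i' j * bε k' i' = s k' j + ε * x i j := by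
        intro j; rw [hsb]; simp [Ne.symm hkk]
      simp only [e1, e2]
      have hGQ : 2 * (G k' - G k) + ε * Q =
          ∑ j, (2 * (x i j * (A k' j * s k' j) - x i j * (A k j * s k j))
            + ε * ((A k j + A k' j) * (x i j) ^ 2)) := by
        rw [Finset.sum_add_distrib, ← Finset.mul_sum, ← Finset.mul_sum,
          Finset.sum_sub_distrib, hG, hQ]
      rw [hGQ, Finset.mul_sum]
      trans (∑ j, (A k j * (ρ * (s k j - ε * x i j)) ^ 2 - A k j * (ρ * s k j) ^ 2
          + (A k' j * (ρ * (s k' j + ε * x i j)) ^ 2 - A k' j * (ρ * s k' j) ^ 2)))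
      · simp only [Finset.sum_add_distrib, Finset.sum_sub_distrib, hs]
      · apply Finset.sum_congr rfl
        intro j _
        ring
    have hX : 0 ≤ ρ ^ 2 * ε * (2 * (G k' - G k) + ε * Q) := by
      rw [← hdiff]
      have : ∀ k'' j, (∑ i', x i' j * bstar k'' i') = s k'' j := fun _ _ => rfl
      linarith [hL]
    have hc : 0 < ρ ^ 2 * ε := by positivity
    nlinarith [hX, hc]
  by_contra hcon
  push_neg at hcon
  have hGG : G k' < G k := hcon
  set δ : ℝ := 2 * (G k - G k') with hδ
  have hδ0 : 0 < δ := by simp [hδ]; linarith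
  set ε : ℝ := min (min (ε₀ / 2) (bstar k i)) (δ / (2 * (Q + 1))) with hε
  have hε0 : 0 < ε := by
    apply lt_min (lt_min (by linarith) hbk)
    positivity
  have h1 : ε < ε₀ := lt_of_le_of_lt (le_trans (min_le_left _ _) (min_le_left _ _)) (by linarith)
  have h2 : ε ≤ bstar k i := le_trans (min_le_left _ _) (min_le_right _ _)
  have h3 : ε ≤ δ / (2 * (Q + 1)) := min_le_right _ _
  have hk := key ε hε0 h1 h2
  have hεQ : ε * Q ≤ δ / 2 := by
    have : ε * Q ≤ (δ / (2 * (Q + 1))) * Q := by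
      apply mul_le_mul_of_nonneg_right h3 hQ0
    have h4 : (δ / (2 * (Q + 1))) * Q ≤ δ / 2 := by
      rw [div_mul_eq_mul_div, div_le_div_iff₀ (by positivity) (by norm_num)]
      nlinarith
    linarith
  linarith [hk]
end
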